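/- Polyak–Łojasiewicz condition for the smoothed robust objective: under direct parameterization, let ρ be a probability distribution on S with ρ_min := min_{s∈S} ρ(s) > 0 and let σ > 0. Then for every θ ∈ Δ(A)^S, J_{σ,ρ}(θ) − min_{θ'∈Δ(A)^S} J_{σ,ρ}(θ') ≤ C_PL · max_{π̂∈Δ(A)^S} ⟨π_θ − π̂, ∇J_{σ,ρ}(θ)⟩ + (γR/(1−γ))·(2·log|S|)/σ, where C_PL = 1/((1−γ)·ρ_min), π_θ = θ, and ⟨·,·⟩ is the Euclidean inner product on ℝ^{S×A}. -/

import Mathlib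

set_option autoImplicit false

open Finset

/-- Log-sum-exp: `LSE(σ, V) = (1/σ)·log (∑ s, exp (σ · V s))`. -/
noncomputable def lse {S : Type*} [Fintype S] (σ : ℝ) (V : S → ℝ) : ℝ :=
  (1 / σ) * Real.log (∑ s, Real.exp (σ * V s))

/-- The stochastic matrix of a policy `π` under the kernel `p`:
`P_π(s,s') = ∑ a, π(a|s)·p(s'|s,a)`. -/
noncomputable def pmat {S A : Type*} [Fintype A] (π : S → A → ℝ) (p : S → A → S → ℝ) :
    Matrix S S ℝ :=
  Matrix.of fun s s' => ∑ a, π s a * p s a s'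

/-- The discounted visitation distribution
`d^π_s(s') = (1-γ+γR)·∑_{t≥0} (γ(1-R))^t·(P_π^t)(s,s')`. -/
noncomputable def dvisit {S A : Type*} [Fintype S] [Fintype A] [DecidableEq S]
    (γ R : ℝ) (π : S → A → ℝ) (p : S → A → S → ℝ) (s s' : S) : ℝ :=
  (1 - γ + γ * R) * ∑' t : ℕ, (γ * (1 - R)) ^ t * ((pmat π p) ^ t) s s'

/-- Direct parameterization: `Θ = Δ(A)^S ⊆ ℝ^{S×A}`, `π_θ(a|s) = θ_{s,a}`. -/
def directSimplex (S A : Type*) [Fintype S] [Fintype A] : Set (EuclideanSpace ℝ (S × A)) :=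
  {θ | ∀ s, (fun a => θ (s, a)) ∈ stdSimplex ℝ A}

/-- The gradient `∇J_{σ,ρ}(θ)` of the smoothed robust objective under direct parameterization
(Theorem 4 specialized): its `(s,b)` entry is `l_θ(s)·Q_σ^{π_θ}(s,b)` with
`l_θ(s) = (1/(1-γ+γR))·d^{π_θ}_ρ(s)
  + (γR/(1-γ))·(∑_{s'} e^{σV_σ(s')}·(1/(1-γ+γR))·d^{π_θ}_{s'}(s))/(∑_{s'} e^{σV_σ(s')})`. -/
noncomputable def gradJDirect {S A : Type*} [Fintype S] [Fintype A] [DecidableEq S]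
    (γ R σ : ℝ) (p : S → A → S → ℝ) (ρ : S → ℝ) (Vσ : S → ℝ) (Qσ : S → A → ℝ)
    (θ : EuclideanSpace ℝ (S × A)) : EuclideanSpace ℝ (S × A) :=
  (WithLp.equiv 2 _).symm fun sb : S × A =>
    ((1 / (1 - γ + γ * R)) * (∑ s₀, ρ s₀ * dvisit γ R (fun s a => θ (s, a)) p s₀ sb.1)
      + (γ * R / (1 - γ)) *
        (∑ s', Real.exp (σ * Vσ s') *
          ((1 / (1 - γ + γ * R)) * dvisit γ R (fun s a => θ (s, a)) p s' sb.1)) /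
        (∑ s', Real.exp (σ * Vσ s'))) * Qσ sb.1 sb.2

/-! Let `a₀(s)` minimise `Q_σ^{π_θ}(s, ·)` and `g(s) = V_σ^{π_θ}(s) - Q_σ^{π_θ}(s, a₀(s)) ≥ 0`.
The gradient has entries `l(s) · Q_σ^{π_θ}(s, a)` with a weight `l(s) ≥ ρ(s)`, so
`π' ↦ ⟨π_θ - π', ∇J⟩` is maximised over `Δ(A)^S` by the deterministic greedy policy `a₀`, with
value `∑ l(s) g(s) ≥ ρ_min ∑ g(s)`.
Since `LSE(σ, V + m) = LSE(σ, V) + m`, the robust `Q`-function moves by at most `γ m` when `V`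
moves by at most `m`; evaluating `V^{π_θ} - V^{π'}` at its maximiser then gives
`(1 - γ) · max (V^{π_θ} - V^{π'}) ≤ ∑ g(s)`, whence `J(θ) - J(θ') ≤ ∑ g(s) / (1 - γ)`.
The additive `log |S|` term is nonnegative. -/

section Simplex

variable {ι : Type*} [Fintype ι] {w f g : ι → ℝ} {m : ℝ}

lemma sum_mul_le_sum_mul_add_of_mem_stdSimplex (hw : w ∈ stdSimplex ℝ ι)
    (h : ∀ i, f i ≤ g i + m) : ∑ i, w i * f i ≤ ∑ i, w i * g i + m :=
  calc ∑ i, w i * f i ≤ ∑ i, w i * (g i + m) :=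
        sum_le_sum fun i _ => mul_le_mul_of_nonneg_left (h i) (hw.1 i)
    _ = ∑ i, w i * g i + m := by simp only [mul_add, sum_add_distrib, ← sum_mul, hw.2, one_mul]

lemma le_sum_mul_of_mem_stdSimplex (hw : w ∈ stdSimplex ℝ ι) (h : ∀ i, m ≤ f i) :
    m ≤ ∑ i, w i * f i :=
  calc m = ∑ i, w i * m := by rw [← sum_mul, hw.2, one_mul]
    _ ≤ ∑ i, w i * f i := sum_le_sum fun i _ => mul_le_mul_of_nonneg_left (h i) (hw.1 i)

end Simplex

lemma sub_csInf_image_le {α : Type*} {K : Set α} {J : α → ℝ} {x : α} (hx : x ∈ K) {b : ℝ}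
    (h : ∀ y ∈ K, J x ≤ J y + b) : J x - sInf (J '' K) ≤ b :=
  sub_le_comm.1 <| le_csInf ⟨_, Set.mem_image_of_mem _ hx⟩ <|
    Set.forall_mem_image.2 fun y hy => sub_le_iff_le_add.2 (h y hy)

section LogSumExp

variable {S : Type*} [Fintype S] [Nonempty S] {σ : ℝ}

lemma lse_add_const (hσ : σ ≠ 0) (V : S → ℝ) (m : ℝ) :
    lse σ (fun s => V s + m) = lse σ V + m := by
  have hpos : 0 < ∑ s, Real.exp (σ * V s) := sum_pos (fun s _ => Real.exp_pos _) univ_nonempty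
  have hfactor : ∑ s, Real.exp (σ * (V s + m)) = (∑ s, Real.exp (σ * V s)) * Real.exp (σ * m) := by
    simp only [sum_mul, mul_add, Real.exp_add]
  rw [lse, lse, hfactor, Real.log_mul hpos.ne' (Real.exp_ne_zero _), Real.log_exp]
  field_simp

lemma lse_mono (hσ : 0 < σ) {V V' : S → ℝ} (h : V ≤ V') : lse σ V ≤ lse σ V' := by
  have hpos : 0 < ∑ s, Real.exp (σ * V s) := sum_pos (fun s _ => Real.exp_pos _) univ_nonempty
  unfold lse
  gcongr with s
  exact h s

lemma lse_le_lse_add (hσ : 0 < σ) {V V' : S → ℝ} {m : ℝ} (h : ∀ s, V s ≤ V' s + m) :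
    lse σ V ≤ lse σ V' + m :=
  (lse_mono hσ h).trans_eq (lse_add_const hσ.ne' V' m)

end LogSumExp

noncomputable def robustQ {S A : Type*} [Fintype S] (c : S → A → ℝ) (γ R σ : ℝ)
    (p : S → A → S → ℝ) (V : S → ℝ) (s : S) (a : A) : ℝ :=
  c s a + γ * (1 - R) * ∑ s', p s a s' * V s' + γ * R * lse σ V

section RobustBellman

variable {S A : Type*} [Fintype S] [Nonempty S] {c : S → A → ℝ} {γ R σ : ℝ}
  {p : S → A → S → ℝ}

lemma robustQ_le_add (hp : ∀ s a, p s a ∈ stdSimplex ℝ S) (hγ : 0 ≤ γ)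
    (hR : R ∈ Set.Icc (0 : ℝ) 1) (hσ : 0 < σ) {V V' : S → ℝ} {m : ℝ}
    (h : ∀ s, V s ≤ V' s + m) (s : S) (a : A) :
    robustQ c γ R σ p V s a ≤ robustQ c γ R σ p V' s a + γ * m := by
  have hP := sum_mul_le_sum_mul_add_of_mem_stdSimplex (hp s a) h
  have hL := lse_le_lse_add hσ h
  have h1 : 0 ≤ γ * (1 - R) := mul_nonneg hγ (by linarith [hR.2])
  have h2 : 0 ≤ γ * R := mul_nonneg hγ hR.1
  unfold robustQ
  linear_combination mul_le_mul_of_nonneg_left hP h1 + mul_le_mul_of_nonneg_left hL h2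

lemma le_add_div_of_isFixedPt_robust [Fintype A] (hp : ∀ s a, p s a ∈ stdSimplex ℝ S)
    (hγ : γ ∈ Set.Ico (0 : ℝ) 1) (hR : R ∈ Set.Icc (0 : ℝ) 1) (hσ : 0 < σ)
    {π' : S → A → ℝ} (hπ' : ∀ s, π' s ∈ stdSimplex ℝ A) {V V' : S → ℝ}
    (hV' : ∀ s, V' s = ∑ a, π' s a * robustQ c γ R σ p V' s a) {g : ℝ}
    (hg : ∀ s, V s - ∑ a, π' s a * robustQ c γ R σ p V s a ≤ g) (s : S) :
    V s ≤ V' s + g / (1 - γ) := by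
  obtain ⟨t, -, ht⟩ := exists_max_image univ (fun s => V s - V' s) univ_nonempty
  set M := V t - V' t
  have hVM : ∀ s, V s ≤ V' s + M := fun s => by linarith [ht s (mem_univ s)]
  have hQ : ∑ a, π' t a * robustQ c γ R σ p V t a ≤ V' t + γ * M := by
    rw [hV' t]
    exact sum_mul_le_sum_mul_add_of_mem_stdSimplex (hπ' t)
      (robustQ_le_add hp hγ.1 hR hσ hVM t)
  have h1γ : 0 < 1 - γ := by linarith [hγ.2]
  rw [← sub_le_iff_le_add', le_div_iff₀ h1γ]
  calc (V s - V' s) * (1 - γ) ≤ M * (1 - γ) :=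
        mul_le_mul_of_nonneg_right (by linarith [hVM s]) h1γ.le
    _ ≤ g := by linarith [hg t]

lemma sum_mul_le_sum_mul_add_div_of_isFixedPt_robust [Fintype A]
    (hp : ∀ s a, p s a ∈ stdSimplex ℝ S) (hγ : γ ∈ Set.Ico (0 : ℝ) 1)
    (hR : R ∈ Set.Icc (0 : ℝ) 1) (hσ : 0 < σ) {π π' : S → A → ℝ}
    (hπ : ∀ s, π s ∈ stdSimplex ℝ A) (hπ' : ∀ s, π' s ∈ stdSimplex ℝ A) {V V' : S → ℝ}
    (hV : ∀ s, V s = ∑ a, π s a * robustQ c γ R σ p V s a)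
    (hV' : ∀ s, V' s = ∑ a, π' s a * robustQ c γ R σ p V' s a) {a₀ : S → A}
    (ha₀ : ∀ s b, robustQ c γ R σ p V s (a₀ s) ≤ robustQ c γ R σ p V s b) {ρ : S → ℝ}
    (hρ : ρ ∈ stdSimplex ℝ S) :
    ∑ s, ρ s * V s ≤ ∑ s, ρ s * V' s +
      (∑ s, (∑ a, π s a * robustQ c γ R σ p V s a - robustQ c γ R σ p V s (a₀ s))) / (1 - γ) :=
  sum_mul_le_sum_mul_add_of_mem_stdSimplex hρ <|
    le_add_div_of_isFixedPt_robust hp hγ hR hσ hπ' hV' fun t => by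
      rw [hV t]
      calc _ ≤ ∑ a, π t a * robustQ c γ R σ p V t a - robustQ c γ R σ p V t (a₀ t) :=
            sub_le_sub_left (le_sum_mul_of_mem_stdSimplex (hπ' t) (ha₀ t)) _
        _ ≤ _ := single_le_sum (fun s _ => sub_nonneg.2 (le_sum_mul_of_mem_stdSimplex (hπ s)
            (ha₀ s))) (mem_univ t)

end RobustBellman

section Visitation

variable {S A : Type*} [Fintype S] [Fintype A] [DecidableEq S] {π : S → A → ℝ}
  {p : S → A → S → ℝ} {γ R : ℝ}

lemma pmat_mem_rowStochastic (hπ : ∀ s, π s ∈ stdSimplex ℝ A)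
    (hp : ∀ s a, p s a ∈ stdSimplex ℝ S) : pmat π p ∈ Matrix.rowStochastic ℝ S := by
  refine Matrix.mem_rowStochastic_iff_sum.2
    ⟨fun s s' => sum_nonneg fun a _ => mul_nonneg ((hπ s).1 a) ((hp s a).1 s'), fun s => ?_⟩
  simp only [pmat, Matrix.of_apply]
  rw [sum_comm]
  simp only [← mul_sum, (hp _ _).2, mul_one]
  exact (hπ s).2

lemma summable_pow_mul_pow_apply {P : Matrix S S ℝ} (hP : P ∈ Matrix.rowStochastic ℝ S) {q : ℝ}
    (hq₀ : 0 ≤ q) (hq₁ : q < 1) (s s' : S) : Summable fun t : ℕ => q ^ t * (P ^ t) s s' :=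
  .of_nonneg_of_le
    (fun t => mul_nonneg (pow_nonneg hq₀ t) (Matrix.nonneg_of_mem_rowStochastic (pow_mem hP t)))
    (fun t => mul_le_of_le_one_right (pow_nonneg hq₀ t)
      (Matrix.le_one_of_mem_rowStochastic (pow_mem hP t)))
    (summable_geometric_of_lt_one hq₀ hq₁)

lemma dvisit_nonneg (hπ : ∀ s, π s ∈ stdSimplex ℝ A) (hp : ∀ s a, p s a ∈ stdSimplex ℝ S)
    (hγ : γ ∈ Set.Icc (0 : ℝ) 1) (hR : R ∈ Set.Icc (0 : ℝ) 1) (s s' : S) :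
    0 ≤ dvisit γ R π p s s' := by
  have hq : 0 ≤ γ * (1 - R) := mul_nonneg hγ.1 (by linarith [hR.2])
  refine mul_nonneg (by linarith [mul_nonneg hγ.1 hR.1, hγ.2]) (tsum_nonneg fun t =>
    mul_nonneg (pow_nonneg hq t)
      (Matrix.nonneg_of_mem_rowStochastic (pow_mem (pmat_mem_rowStochastic hπ hp) t)))

lemma le_dvisit_self (hπ : ∀ s, π s ∈ stdSimplex ℝ A) (hp : ∀ s a, p s a ∈ stdSimplex ℝ S)
    (hγ : γ ∈ Set.Ico (0 : ℝ) 1) (hR : R ∈ Set.Icc (0 : ℝ) 1) (s : S) :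
    1 - γ + γ * R ≤ dvisit γ R π p s s := by
  have hP := pmat_mem_rowStochastic hπ hp
  have hq₀ : 0 ≤ γ * (1 - R) := mul_nonneg hγ.1 (by linarith [hR.2])
  have hq₁ : γ * (1 - R) < 1 := by linarith [mul_nonneg hγ.1 hR.1, hγ.2]
  have hone : 1 ≤ ∑' t : ℕ, (γ * (1 - R)) ^ t * (pmat π p ^ t) s s := by
    simpa using (summable_pow_mul_pow_apply hP hq₀ hq₁ s s).le_tsum 0 fun t _ =>
      mul_nonneg (pow_nonneg hq₀ t) (Matrix.nonneg_of_mem_rowStochastic (pow_mem hP t))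
  exact le_mul_of_one_le_right (by linarith [mul_nonneg hγ.1 hR.1, hγ.2]) hone

end Visitation

noncomputable def gradWeight {S A : Type*} [Fintype S] [Fintype A] [DecidableEq S]
    (γ R σ : ℝ) (p : S → A → S → ℝ) (ρ : S → ℝ) (V : S → ℝ) (θ : EuclideanSpace ℝ (S × A))
    (s : S) : ℝ :=
  (1 / (1 - γ + γ * R)) * (∑ s₀, ρ s₀ * dvisit γ R (fun s a => θ (s, a)) p s₀ s)
    + (γ * R / (1 - γ)) *
      (∑ s', Real.exp (σ * V s') *
        ((1 / (1 - γ + γ * R)) * dvisit γ R (fun s a => θ (s, a)) p s' s)) /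
      (∑ s', Real.exp (σ * V s'))

section Gradient

variable {S A : Type*} [Fintype S] [Fintype A] [DecidableEq S] {γ R σ : ℝ}
  {p : S → A → S → ℝ} {ρ : S → ℝ}

lemma gradJDirect_apply (V : S → ℝ) (Q : S → A → ℝ) (θ : EuclideanSpace ℝ (S × A)) (s : S)
    (a : A) : gradJDirect γ R σ p ρ V Q θ (s, a) = gradWeight γ R σ p ρ V θ s * Q s a :=
  rfl

lemma le_gradWeight {θ : EuclideanSpace ℝ (S × A)} (hθ : θ ∈ directSimplex S A)
    (hp : ∀ s a, p s a ∈ stdSimplex ℝ S) (hγ : γ ∈ Set.Ico (0 : ℝ) 1)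
    (hR : R ∈ Set.Icc (0 : ℝ) 1) (hρ : ∀ s, 0 ≤ ρ s) (V : S → ℝ) (s : S) :
    ρ s ≤ gradWeight γ R σ p ρ V θ s := by
  have hC : 0 < 1 - γ + γ * R := by linarith [mul_nonneg hγ.1 hR.1, hγ.2]
  have hd := dvisit_nonneg hθ hp (Set.Ico_subset_Icc_self hγ) hR
  have hfirst : ρ s ≤ (1 / (1 - γ + γ * R)) *
      ∑ s₀, ρ s₀ * dvisit γ R (fun s a => θ (s, a)) p s₀ s := by
    rw [one_div_mul_eq_div, le_div_iff₀ hC]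
    calc ρ s * (1 - γ + γ * R) ≤ ρ s * dvisit γ R (fun s a => θ (s, a)) p s s :=
          mul_le_mul_of_nonneg_left (le_dvisit_self hθ hp hγ hR s) (hρ s)
      _ ≤ _ := single_le_sum (f := fun s₀ => ρ s₀ * dvisit γ R (fun s a => θ (s, a)) p s₀ s)
          (fun s₀ _ => mul_nonneg (hρ s₀) (hd s₀ s)) (mem_univ s)
  have hsecond : 0 ≤ (γ * R / (1 - γ)) *
      (∑ s', Real.exp (σ * V s') *
        ((1 / (1 - γ + γ * R)) * dvisit γ R (fun s a => θ (s, a)) p s' s)) /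
      (∑ s', Real.exp (σ * V s')) :=
    div_nonneg (mul_nonneg (div_nonneg (mul_nonneg hγ.1 hR.1) (by linarith [hγ.2]))
      (sum_nonneg fun s' _ => mul_nonneg (Real.exp_pos _).le
        (mul_nonneg (one_div_nonneg.2 hC.le) (hd s' s))))
      (sum_nonneg fun s' _ => (Real.exp_pos _).le)
  unfold gradWeight
  linarith

end Gradient

section Greedy

variable {S A : Type*} [Fintype A] [DecidableEq A]

def greedy (a₀ : S → A) : EuclideanSpace ℝ (S × A) :=
  WithLp.toLp 2 fun sa => if sa.2 = a₀ sa.1 then 1 else 0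

lemma greedy_mem_directSimplex [Fintype S] (a₀ : S → A) : greedy a₀ ∈ directSimplex S A :=
  fun s => ⟨fun a => by simp only [greedy]; split_ifs <;> norm_num, by simp [greedy]⟩

lemma sum_greedy_mul (a₀ : S → A) (Q : S → A → ℝ) (s : S) :
    ∑ a, greedy a₀ (s, a) * Q s a = Q s (a₀ s) := by
  simp [greedy]

end Greedy

section InnerProduct

variable {S A : Type*} [Fintype S] [Fintype A] {l : S → ℝ} {Q : S → A → ℝ}
  {G : EuclideanSpace ℝ (S × A)}

lemma inner_eq_sum_of_apply_eq_mul (hG : ∀ s a, G (s, a) = l s * Q s a)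
    (x : EuclideanSpace ℝ (S × A)) : inner ℝ x G = ∑ s, l s * ∑ a, x (s, a) * Q s a := by
  simp only [PiLp.inner_apply, Fintype.sum_prod_type, mul_sum, hG, RCLike.inner_apply,
    conj_trivial]
  exact sum_congr rfl fun s _ => sum_congr rfl fun a _ => by ring

lemma isGreatest_inner_sub_greedy [DecidableEq A] (hl : ∀ s, 0 ≤ l s)
    (hG : ∀ s a, G (s, a) = l s * Q s a) {a₀ : S → A} (ha₀ : ∀ s b, Q s (a₀ s) ≤ Q s b)
    (θ : EuclideanSpace ℝ (S × A)) :
    IsGreatest ((fun π' => inner ℝ (θ - π') G) '' directSimplex S A)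
      (∑ s, l s * (∑ a, θ (s, a) * Q s a - Q s (a₀ s))) := by
  have hsub : ∀ π', inner ℝ (θ - π') G =
      ∑ s, l s * (∑ a, θ (s, a) * Q s a - ∑ a, π' (s, a) * Q s a) := fun π' => by
    rw [inner_sub_left, inner_eq_sum_of_apply_eq_mul hG, inner_eq_sum_of_apply_eq_mul hG]
    simp only [mul_sub, sum_sub_distrib]
  refine ⟨⟨greedy a₀, greedy_mem_directSimplex a₀, by simp only [hsub, sum_greedy_mul]⟩, ?_⟩
  rintro _ ⟨π', hπ', rfl⟩
  simp only [hsub]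
  exact sum_le_sum fun s _ => mul_le_mul_of_nonneg_left
    (sub_le_sub_left (le_sum_mul_of_mem_stdSimplex (hπ' s) (ha₀ s)) _) (hl s)

end InnerProduct

theorem stmt_17_general {S A : Type*} [Fintype S] [Fintype A] [Nonempty S] [Nonempty A] [DecidableEq S]
    (c : S → A → ℝ)
    (γ : ℝ) (hγ : γ ∈ Set.Ico (0 : ℝ) 1)
    (R : ℝ) (hR : R ∈ Set.Icc (0 : ℝ) 1)
    (p : S → A → S → ℝ) (hp : ∀ s a, p s a ∈ stdSimplex ℝ S)
    (σ : ℝ) (hσ : 0 < σ)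
    (ρ : S → ℝ) (hρ : ρ ∈ stdSimplex ℝ S) (hρmin : ∀ s, 0 < ρ s)
    (Vσ : EuclideanSpace ℝ (S × A) → S → ℝ)
    (hVσ : ∀ θ ∈ directSimplex S A, ∀ s, Vσ θ s = ∑ a, θ (s, a) * (c s a
      + γ * (1 - R) * ∑ s', p s a s' * Vσ θ s'
      + γ * R * lse σ (Vσ θ)))
    (Qσ : EuclideanSpace ℝ (S × A) → S → A → ℝ)
    (hQσ : ∀ θ ∈ directSimplex S A, ∀ s a, Qσ θ s a = c s a
      + γ * (1 - R) * ∑ s', p s a s' * Vσ θ s' + γ * R * lse σ (Vσ θ))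
    (θ : EuclideanSpace ℝ (S × A)) (hθ : θ ∈ directSimplex S A) :
    (∑ s, ρ s * Vσ θ s) - sInf ((fun θ' => ∑ s, ρ s * Vσ θ' s) '' directSimplex S A) ≤
      (1 / ((1 - γ) * univ.inf' univ_nonempty ρ)) *
        sSup ((fun πhat : EuclideanSpace ℝ (S × A) =>
          (inner ℝ (θ - πhat) (gradJDirect γ R σ p ρ (Vσ θ) (Qσ θ) θ) : ℝ)) ''
            directSimplex S A)
      + (γ * R / (1 - γ)) * (2 * Real.log (Fintype.card S)) / σ := by
  classical
  rw [show Qσ θ = robustQ c γ R σ p (Vσ θ) from funext₂ (hQσ θ hθ)]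
  set Q := robustQ c γ R σ p (Vσ θ)
  choose a₀ ha₀ using fun s => Finite.exists_min (Q s)
  set adv : S → ℝ := fun s => ∑ a, θ (s, a) * Q s a - Q s (a₀ s)
  have hadv : ∀ s, 0 ≤ adv s := fun s => sub_nonneg.2 (le_sum_mul_of_mem_stdSimplex (hθ s) (ha₀ s))
  set ρmin := univ.inf' univ_nonempty ρ
  have hρmin_pos : 0 < ρmin := (lt_inf'_iff _).2 fun s _ => hρmin s
  have hl : ∀ s, ρmin ≤ gradWeight γ R σ p ρ (Vσ θ) θ s := fun s =>
    (inf'_le ρ (mem_univ s)).trans (le_gradWeight hθ hp hγ hR (fun s => (hρmin s).le) _ s)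
  rw [(isGreatest_inner_sub_greedy (fun s => hρmin_pos.le.trans (hl s))
    (gradJDirect_apply _ _ θ) ha₀ θ).csSup_eq]
  have h1γ : 0 < 1 - γ := by linarith [hγ.2]
  calc _ ≤ (∑ s, adv s) / (1 - γ) :=
        sub_csInf_image_le (J := fun θ' => ∑ s, ρ s * Vσ θ' s) hθ fun θ' hθ' =>
          sum_mul_le_sum_mul_add_div_of_isFixedPt_robust hp hγ hR hσ hθ hθ' (hVσ θ hθ)
            (hVσ θ' hθ') ha₀ hρ
    _ = (1 / ((1 - γ) * ρmin)) * (ρmin * ∑ s, adv s) := by field_simp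
    _ ≤ (1 / ((1 - γ) * ρmin)) * ∑ s, gradWeight γ R σ p ρ (Vσ θ) θ s * adv s := by
        rw [mul_sum]
        gcongr with s
        exacts [hadv s, hl s]
    _ ≤ _ := le_add_of_nonneg_right <| div_nonneg (mul_nonneg
        (div_nonneg (mul_nonneg hγ.1 hR.1) h1γ.le) (by positivity)) hσ.le

/-- **Polyak–Łojasiewicz condition for the smoothed robust objective (Theorem 5)**: under
direct parameterization with `ρ_min = min_s ρ(s) > 0` and `σ > 0`, for every `θ ∈ Δ(A)^S`,
`J_{σ,ρ}(θ) - min J_{σ,ρ} ≤ C_PL · max_{π̂∈Δ(A)^S} ⟨π_θ - π̂, ∇J_{σ,ρ}(θ)⟩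
  + (γR/(1-γ))·(2·log|S|)/σ`, where `C_PL = 1/((1-γ)·ρ_min)`. -/
theorem stmt_17 {S A : Type*} [Fintype S] [Fintype A] [Nonempty S] [Nonempty A] [DecidableEq S]
    (c : S → A → ℝ) (hc : ∀ s a, c s a ∈ Set.Icc (0 : ℝ) 1)
    (γ : ℝ) (hγ : γ ∈ Set.Ico (0 : ℝ) 1)
    (R : ℝ) (hR : R ∈ Set.Icc (0 : ℝ) 1)
    (p : S → A → S → ℝ) (hp : ∀ s a, p s a ∈ stdSimplex ℝ S)
    (σ : ℝ) (hσ : 0 < σ)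
    (ρ : S → ℝ) (hρ : ρ ∈ stdSimplex ℝ S) (hρmin : ∀ s, 0 < ρ s)
    (Vσ : EuclideanSpace ℝ (S × A) → S → ℝ)
    (hVσ : ∀ θ ∈ directSimplex S A, ∀ s, Vσ θ s = ∑ a, θ (s, a) * (c s a
      + γ * (1 - R) * ∑ s', p s a s' * Vσ θ s'
      + γ * R * lse σ (Vσ θ)))
    (Qσ : EuclideanSpace ℝ (S × A) → S → A → ℝ)
    (hQσ : ∀ θ ∈ directSimplex S A, ∀ s a, Qσ θ s a = c s a
      + γ * (1 - R) * ∑ s', p s a s' * Vσ θ s' + γ * R * lse σ (Vσ θ))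
    (θ : EuclideanSpace ℝ (S × A)) (hθ : θ ∈ directSimplex S A) :
    (∑ s, ρ s * Vσ θ s) - sInf ((fun θ' => ∑ s, ρ s * Vσ θ' s) '' directSimplex S A) ≤
      (1 / ((1 - γ) * univ.inf' univ_nonempty ρ)) *
        sSup ((fun πhat : EuclideanSpace ℝ (S × A) =>
          (inner ℝ (θ - πhat) (gradJDirect γ R σ p ρ (Vσ θ) (Qσ θ) θ) : ℝ)) ''
            directSimplex S A)
      + (γ * R / (1 - γ)) * (2 * Real.log (Fintype.card S)) / σ :=
  stmt_17_general c γ hγ R hR p hp σ hσ ρ hρ hρmin Vσ hVσ Qσ hQσ θ hθ
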